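/- Let E be an n-dimensional real inner product space, and let L ⊆ E be a full-rank ℤ-lattice with dual lattice L* = {x ∈ E : ⟪x,y⟫ ∈ ℤ for all y ∈ L}. Assume L ⊆ L*. Then the quotient group L*/L is finite and its cardinality equals v², where v is the covolume of L (the volume of a fundamental domain of L with respect to the Lebesgue measure determined by the inner product). -/

import Mathlib

open scoped RealInnerProductSpace

/-- The dual lattice `L* = {x : ⟪x,y⟫ ∈ ℤ for all y ∈ L}` of a `ℤ`-submodule
`L` of Euclidean space. -/
noncomputable def dualLattice {n : ℕ} (L : Submodule ℤ (EuclideanSpace ℝ (Fin n))) :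
    Submodule ℤ (EuclideanSpace ℝ (Fin n)) where
  carrier := {x | ∀ y ∈ L, ∃ m : ℤ, ⟪x, y⟫ = (m : ℝ)}
  zero_mem' := fun y _ => ⟨0, by simp⟩
  add_mem' := by
    intro x x' hx hx' y hy
    obtain ⟨m, hm⟩ := hx y hy
    obtain ⟨m', hm'⟩ := hx' y hy
    exact ⟨m + m', by rw [inner_add_left, hm, hm']; push_cast; ring⟩
  smul_mem' := by
    intro c x hx y hy
    obtain ⟨m, hm⟩ := hx y hy
    refine ⟨c * m, ?_⟩
    rw [← Int.cast_smul_eq_zsmul ℝ c x, real_inner_smul_left, hm]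
    push_cast; ring

open Module MeasureTheory in
lemma covolume_eq_abs_det_aux {n : ℕ} (L : Submodule ℤ (EuclideanSpace ℝ (Fin n)))
    [DiscreteTopology L] [IsZLattice ℝ L]
    (b : Basis (Fin n) ℤ L) :
    ZLattice.covolume L
      = |((EuclideanSpace.basisFun (Fin n) ℝ).toBasis).det (fun i => (b i : EuclideanSpace ℝ (Fin n)))| := by
  rw [ZLattice.covolume_eq_det_mul_measureReal (L := L) (μ := volume) b
    (EuclideanSpace.basisFun (Fin n) ℝ).toBasis,
    measureReal_congr (ZSpan.fundamentalDomain_ae_parallelepiped _ volume)]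
  rw [show parallelepiped ⇑(EuclideanSpace.basisFun (Fin n) ℝ).toBasis
      = parallelepiped ⇑(EuclideanSpace.basisFun (Fin n) ℝ) by
    rw [OrthonormalBasis.coe_toBasis]]
  rw [measureReal_def, OrthonormalBasis.volume_parallelepiped]
  simp [Function.comp_def]

open Module in
set_option maxHeartbeats 1000000 in
/-- Let `L` be a full-rank `ℤ`-lattice in an `n`-dimensional real inner
product space with `L ⊆ L*` (the inner product is integer valued on `L`).
Then the quotient `L*/L` is finite, of cardinality `v²` where `v` is the
covolume of `L`. -/
theorem card_dual_lattice_quotient {n : ℕ}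
    (L : Submodule ℤ (EuclideanSpace ℝ (Fin n)))
    [DiscreteTopology L] [IsZLattice ℝ L]
    (hLL : ∀ x ∈ L, ∀ y ∈ L, ∃ m : ℤ, ⟪x, y⟫ = (m : ℝ)) :
    Finite ((dualLattice L) ⧸ (Submodule.comap (dualLattice L).subtype L)) ∧
    (Nat.card ((dualLattice L) ⧸ (Submodule.comap (dualLattice L).subtype L)) : ℝ)
      = (ZLattice.covolume L) ^ 2 := by
  classical
  have hB : (innerₗ (EuclideanSpace ℝ (Fin n))).Nondegenerate := by
    constructor <;> intro x hx
    all_goals exact inner_self_eq_zero.mp (hx x)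
  have hrank : Module.finrank ℤ L = n := by
    rw [ZLattice.rank ℝ L, finrank_euclideanSpace_fin]
  let e : Module.Free.ChooseBasisIndex ℤ L ≃ Fin n :=
    Fintype.equivFinOfCardEq (by rw [← Module.finrank_eq_card_chooseBasisIndex, hrank])
  let bL : Basis (Fin n) ℤ L := (Module.Free.chooseBasis ℤ L).reindex e
  let c : Basis (Fin n) ℝ (EuclideanSpace ℝ (Fin n)) := Basis.ofZLatticeBasis ℝ L bL
  let B : LinearMap.BilinForm ℝ (EuclideanSpace ℝ (Fin n)) := innerₗ _
  let d : Basis (Fin n) ℝ (EuclideanSpace ℝ (Fin n)) := B.dualBasis hB c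
  have hdual : dualLattice L = Submodule.span ℤ (Set.range ⇑d) := by
    have h1 : dualLattice L = B.dualSubmodule L := by
      ext x
      show (∀ y ∈ L, ∃ m : ℤ, ⟪x, y⟫ = (m : ℝ)) ↔ ∀ y ∈ L, B x y ∈ (1 : Submodule ℤ ℝ)
      refine forall₂_congr fun y hy => ?_
      rw [Submodule.mem_one]
      constructor
      · rintro ⟨m, hm⟩; exact ⟨m, by simpa [B] using hm.symm⟩
      · rintro ⟨m, hm⟩; exact ⟨m, by simpa [B] using hm.symm⟩
    have h2 := B.dualSubmodule_span_of_basis (R := ℤ) hB c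
    rw [Basis.ofZLatticeBasis_span ℝ L bL] at h2
    exact h1.trans h2
  rw [hdual]
  have hle : L ≤ Submodule.span ℤ (Set.range ⇑d) := by
    rw [← hdual]
    intro x hx y hy
    exact hLL x hx y hy
  set L' := Submodule.span ℤ (Set.range ⇑d) with hL'def
  set N := Submodule.comap L'.subtype L with hNdef
  have hli : LinearIndependent ℤ ⇑d :=
    d.linearIndependent.restrict_scalars (by intro a b h; simpa using h)
  let bL' : Basis (Fin n) ℤ L' := Basis.span hli
  obtain ⟨m, snf⟩ := Submodule.smithNormalForm bL' N
  have hm : m = n := by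
    have h1 : Module.finrank ℤ N = m := by
      rw [Module.finrank_eq_card_basis snf.bN, Fintype.card_fin]
    have h2 : Module.finrank ℤ N = Module.finrank ℤ L :=
      (Submodule.comapSubtypeEquivOfLe hle).finrank_eq
    rw [h2, hrank] at h1
    omega
  have hm' : n = m := hm.symm
  subst hm'
  have ha : ∀ i, snf.a i ≠ 0 := by
    intro i hi
    refine snf.bN.ne_zero i ?_
    have h := snf.snf i
    rw [hi, zero_smul] at h
    exact Subtype.ext h
  -- cardinality of the quotient
  have hcard : Nat.card (L' ⧸ N) = ∏ i, (snf.a i).natAbs := by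
    have h := snf.toAddSubgroup_index_eq_pow_mul_prod
    simp only [Ideal.span_singleton_toAddSubgroup_eq_zmultiples, Int.index_zmultiples,
      Fintype.card_fin, Nat.sub_self, pow_zero, one_mul] at h
    exact h
  -- determinant bookkeeping
  let b₀ : Basis (Fin n) ℝ (EuclideanSpace ℝ (Fin n)) :=
    (EuclideanSpace.basisFun (Fin n) ℝ).toBasis
  have hrepr : ∀ (x : EuclideanSpace ℝ (Fin n)) i, b₀.repr x i = x i := by
    intro x i
    simp [b₀, OrthonormalBasis.coe_toBasis_repr_apply]
  have hcovL : ZLattice.covolume L = |b₀.det fun i => (bL i : EuclideanSpace ℝ (Fin n))| :=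
    covolume_eq_abs_det_aux L bL
  have hcb : (fun i => (bL i : EuclideanSpace ℝ (Fin n))) = ⇑c := by
    ext1 i
    exact (Basis.ofZLatticeBasis_apply ℝ L bL i).symm
  rw [hcb] at hcovL
  have hdet1 : (b₀.toMatrix ⇑d).det * (b₀.toMatrix ⇑c).det = 1 := by
    have hmul : (b₀.toMatrix ⇑d).transpose * (b₀.toMatrix ⇑c) = 1 := by
      ext i j
      have hBij := B.apply_dualBasis_left hB c i j
      have hinner : B (d i) (c j) = ∑ k, d i k * c j k := by
        rw [show B (d i) (c j) = ⟪d i, c j⟫ from rfl, PiLp.inner_apply]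
        simp [RCLike.inner_apply, mul_comm]
      rw [hinner] at hBij
      simp only [Matrix.mul_apply, Matrix.transpose_apply, Basis.toMatrix_apply, hrepr,
        Matrix.one_apply]
      rw [hBij]
      by_cases hij : i = j <;> simp [hij, eq_comm]
    have h := congrArg Matrix.det hmul
    rwa [Matrix.det_mul, Matrix.det_one, Matrix.det_transpose] at h
  -- instances for L'
  haveI hdt : DiscreteTopology L' :=
    inferInstanceAs (DiscreteTopology (Submodule.span ℤ (Set.range ⇑d)))
  haveI hzl : IsZLattice ℝ L' := instIsZLatticeRealSpan d
  set w : Fin n → EuclideanSpace ℝ (Fin n) := fun j => ((snf.bM j : L') : EuclideanSpace ℝ (Fin n))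
    with hwdef
  have hv1 : ZLattice.covolume L'
      = |b₀.det fun i => ((bL' i : L') : EuclideanSpace ℝ (Fin n))| :=
    covolume_eq_abs_det_aux L' bL'
  have hv2 : ZLattice.covolume L' = |b₀.det w| := covolume_eq_abs_det_aux L' snf.bM
  have hbd : (fun i => ((bL' i : L') : EuclideanSpace ℝ (Fin n))) = ⇑d :=
    funext fun i => congrArg Subtype.val (Basis.span_apply hli i)
  have hdetw : |b₀.det w| = |b₀.det ⇑d| := by rw [← hv2, hv1, hbd]
  -- second basis of `L` coming from the Smith normal form
  let bLN : Basis (Fin n) ℤ L := snf.bN.map (Submodule.comapSubtypeEquivOfLe hle)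
  have hco : ∀ i, ((bLN i : L) : EuclideanSpace ℝ (Fin n))
      = (snf.a i : ℝ) • w (snf.f i) := by
    intro i
    have h1 : ((bLN i : L) : EuclideanSpace ℝ (Fin n))
        = ((snf.bN i : L') : EuclideanSpace ℝ (Fin n)) := rfl
    rw [h1, snf.snf i]
    push_cast
    rw [Int.cast_smul_eq_zsmul]
  let σ : Equiv.Perm (Fin n) :=
    Equiv.ofBijective ⇑snf.f (Finite.injective_iff_bijective.mp snf.f.injective)
  have hσ : ∀ j, σ j = snf.f j := fun _ => rfl
  have hcovL2 : ZLattice.covolume L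
      = |∏ i, (snf.a i : ℝ)| * |(b₀.toMatrix ⇑d).det| := by
    rw [covolume_eq_abs_det_aux L bLN]
    rw [show (fun i => ((bLN i : L) : EuclideanSpace ℝ (Fin n)))
        = fun i => (snf.a i : ℝ) • w (snf.f i) from funext hco]
    rw [Basis.det_apply]
    have hmat : b₀.toMatrix (fun i => (snf.a i : ℝ) • w (snf.f i))
        = Matrix.of fun i j => (snf.a j : ℝ) * ((b₀.toMatrix w).submatrix id ⇑σ) i j := by
      ext i j
      simp only [Basis.toMatrix_apply, Matrix.of_apply, Matrix.submatrix_apply, id_eq, hσ,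
        map_smul, Finsupp.smul_apply, smul_eq_mul]
    rw [hmat, Matrix.det_mul_row, Matrix.det_permute']
    rw [abs_mul, abs_mul]
    have hww : |(b₀.toMatrix w).det| = |(b₀.toMatrix ⇑d).det| := by
      rw [← Basis.det_apply, ← Basis.det_apply]; exact hdetw
    rw [hww]
    obtain h | h := Int.units_eq_one_or σ.sign
    · rw [h]; norm_num
    · rw [h]; norm_num
  have hX : |(b₀.toMatrix ⇑c).det| * |(b₀.toMatrix ⇑d).det| = 1 := by
    rw [← abs_mul, mul_comm, hdet1, abs_one]
  have hcovd : ZLattice.covolume L = |(b₀.toMatrix ⇑c).det| := by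
    rw [hcovL, Basis.det_apply]
  have key : |∏ i, (snf.a i : ℝ)| = ZLattice.covolume L ^ 2 := by
    have h2 : ZLattice.covolume L ^ 2
        = |∏ i, (snf.a i : ℝ)| * (|(b₀.toMatrix ⇑d).det| * |(b₀.toMatrix ⇑c).det|) := by
      rw [pow_two]
      nth_rewrite 1 [hcovL2]
      rw [hcovd]
      ring
    rw [mul_comm] at hX
    rw [h2, hX, mul_one]
  constructor
  · refine Nat.finite_of_card_ne_zero ?_
    rw [hcard]
    simp only [ne_eq, Finset.prod_eq_zero_iff, not_exists]
    intro i
    simp only [Finset.mem_univ, true_and, not_and]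
    exact fun h => ha i (Int.natAbs_eq_zero.mp h)
  · rw [hcard]
    push_cast [Nat.cast_natAbs]
    rw [← Finset.abs_prod]
    exact key
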